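/- Weak stability consequence (Lemma 5.2 mechanism): let Σ(t) be a CMC surface with lapse ρ_t and Jacobi operator L_t satisfying dH_t/dt = L_t ρ_t, H_t constant on Σ(t), and the weak stability estimate -∫(ψ L_t ψ) ≥ λ∫ψ² for all zero-average ψ. Then ∫ (Ric(ν_t,ν_t) + |A|²) ρ_t dσ ≥ (λ/ρ̄_t)∫(ρ_t - ρ̄_t)² dσ + ρ̄_t ∫(Ric(ν_t,ν_t) + |A|²) dσ, where ρ̄_t > 0 is the average of ρ_t. -/

import Mathlib

open MeasureTheory

/-!
Since `L` shifts constants by multiples of the potential and `L ρ ≡ dH/dt` is constant,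
the zero-average function `ψ = ρ - ρ̄` has `L ψ = dH/dt - ρ̄ V`. Pairing with `ψ` kills the
constant, so `-∫ ψ L ψ = ρ̄ ∫ ψ V = ρ̄ (∫ V ρ - ρ̄ ∫ V)`, and the stability estimate for `ψ`
divided by `ρ̄ > 0` is the claim.
-/

section

variable {S : Type*} [MeasurableSpace S] {μ : Measure S}

theorem integral_mul_const_sub_mul_of_integral_eq_zero {ψ V : S → ℝ} (d c : ℝ)
    (hψ : Integrable ψ μ) (hψV : Integrable (fun x => ψ x * V x) μ)
    (hψ0 : ∫ x, ψ x ∂μ = 0) :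
    ∫ x, ψ x * (d - c * V x) ∂μ = -(c * ∫ x, ψ x * V x ∂μ) := by
  have hsplit : (fun x => ψ x * (d - c * V x)) = fun x => d * ψ x - c * (ψ x * V x) := by
    funext x; ring
  rw [hsplit, integral_sub (hψ.const_mul d) (hψV.const_mul c), integral_const_mul,
    integral_const_mul, hψ0]
  ring

theorem integral_sub_const_mul {ρ V : S → ℝ} (c : ℝ) (hV : Integrable V μ)
    (hVρ : Integrable (fun x => V x * ρ x) μ) :
    ∫ x, (ρ x - c) * V x ∂μ = ∫ x, V x * ρ x ∂μ - c * ∫ x, V x ∂μ := by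
  have hsplit : (fun x => (ρ x - c) * V x) = fun x => V x * ρ x - c * V x := by
    funext x; ring
  rw [hsplit, integral_sub hVρ (hV.const_mul c), integral_const_mul]

end

theorem weak_stability_consequence_general
    {S : Type*} [MeasurableSpace S] (μ : Measure S) [IsFiniteMeasure μ]
    (A : ℝ) (hA : A = (μ Set.univ).toReal)
    (L : (S → ℝ) → (S → ℝ))
    (V ρ : S → ℝ) (lam dH ρbar : ℝ)
    (hρbar : ρbar = (∫ x, ρ x ∂μ) / A) (hρbarpos : 0 < ρbar)
    (hintρ : Integrable ρ μ) (hintV : Integrable V μ)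
    (hintVρ : Integrable (fun x => V x * ρ x) μ)
    (hLρ : ∀ x, L ρ x = dH)
    (hLshift : ∀ (c : ℝ) (x : S), L (fun y => ρ y - c) x = L ρ x - c * V x)
    (hstab : ∀ ψ : S → ℝ, (∫ x, ψ x ∂μ) = 0 →
      lam * (∫ x, (ψ x) ^ 2 ∂μ) ≤ -(∫ x, ψ x * L ψ x ∂μ)) :
    (∫ x, V x * ρ x ∂μ) ≥
      (lam / ρbar) * (∫ x, (ρ x - ρbar) ^ 2 ∂μ) + ρbar * (∫ x, V x ∂μ) := by
  have hmean : ρbar = ⨍ x, ρ x ∂μ := by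
    rw [hρbar, hA, average_eq, smul_eq_mul, measureReal_def, div_eq_inv_mul]
  have hψ0 : ∫ x, ρ x - ρbar ∂μ = 0 := hmean ▸ integral_sub_average μ ρ
  have hψV : Integrable (fun x => (ρ x - ρbar) * V x) μ := by
    refine (hintVρ.sub (hintV.const_mul ρbar)).congr (.of_forall fun x => ?_)
    simp only [Pi.sub_apply]
    ring
  have hpairing : ∫ x, (ρ x - ρbar) * L (fun y => ρ y - ρbar) x ∂μ =
      -(ρbar * (∫ x, V x * ρ x ∂μ - ρbar * ∫ x, V x ∂μ)) := by
    simp only [hLshift, hLρ]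
    rw [integral_mul_const_sub_mul_of_integral_eq_zero (ψ := fun x => ρ x - ρbar) dH ρbar
      (hintρ.sub (integrable_const ρbar)) hψV hψ0, integral_sub_const_mul ρbar hintV hintVρ]
  have hkey := hstab (fun y => ρ y - ρbar) hψ0
  rw [hpairing, neg_neg] at hkey
  rw [ge_iff_le, div_mul_eq_mul_div, div_add' _ _ _ hρbarpos.ne', div_le_iff₀ hρbarpos]
  linarith

/-- Lemma 5.2 mechanism: let `Σ(t)` be a CMC surface (area measure `μ`)
with positive lapse `ρ` of average `ρ̄ > 0`, potential `V = Ric(ν,ν) + |A|²` and Jacobi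
operator `L` satisfying `dH/dt = Lρ` with `dH/dt` constant on `Σ(t)` (`hLρ`), the
linearity relation `L(ρ - c) = Lρ - cV` (`hLshift`), and the weak stability estimate
`-∫ ψ Lψ ≥ λ ∫ ψ²` for all zero-average `ψ`. Then
`∫ V ρ ≥ (λ/ρ̄) ∫ (ρ - ρ̄)² + ρ̄ ∫ V`. -/
theorem weak_stability_consequence
    {S : Type*} [MeasurableSpace S] (μ : Measure S) [IsFiniteMeasure μ]
    (A : ℝ) (hA : A = (μ Set.univ).toReal) (hApos : 0 < A)
    (L : (S → ℝ) → (S → ℝ))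
    (V ρ : S → ℝ) (lam dH ρbar : ℝ)
    (hρbar : ρbar = (∫ x, ρ x ∂μ) / A) (hρbarpos : 0 < ρbar)
    (hintρ : Integrable ρ μ) (hintV : Integrable V μ)
    (hintVρ : Integrable (fun x => V x * ρ x) μ)
    (hintsq : Integrable (fun x => (ρ x - ρbar) ^ 2) μ)
    (hintLψ : Integrable (fun x => (ρ x - ρbar) * L (fun y => ρ y - ρbar) x) μ)
    (hLρ : ∀ x, L ρ x = dH)
    (hLshift : ∀ (c : ℝ) (x : S), L (fun y => ρ y - c) x = L ρ x - c * V x)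
    (hstab : ∀ ψ : S → ℝ, (∫ x, ψ x ∂μ) = 0 →
      lam * (∫ x, (ψ x) ^ 2 ∂μ) ≤ -(∫ x, ψ x * L ψ x ∂μ)) :
    (∫ x, V x * ρ x ∂μ) ≥
      (lam / ρbar) * (∫ x, (ρ x - ρbar) ^ 2 ∂μ) + ρbar * (∫ x, V x ∂μ) :=
  weak_stability_consequence_general μ A hA L V ρ lam dH ρbar hρbar hρbarpos hintρ hintV hintVρ hLρ
    hLshift hstab
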